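/- If A is an n-by-n complex matrix, then either 0 ≤ p(A) ≤ min{a(A), n − 1} or p(A) = ∞ (i.e., every power A^ℓ, ℓ ≥ 0, is a partial isometry). -/
import Mathlib

open Matrix

noncomputable section

/-- An `ι`-by-`ι` complex matrix `A` is a *partial isometry* if `‖Ax‖ = ‖x‖` for every
vector `x` in the orthogonal complement of `ker A` (Euclidean structure). -/
def Matrix.IsPartialIsometry {ι : Type*} [Fintype ι] [DecidableEq ι]
    (A : Matrix ι ι ℂ) : Prop :=
  ∀ x ∈ (LinearMap.ker (Matrix.toEuclideanLin A))ᗮ, ‖Matrix.toEuclideanLin A x‖ = ‖x‖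

/-- The *power partial isometry index* `p(A)`: the supremum (in `ℕ∞`, possibly `⊤`) of the
nonnegative integers `j` such that `I, A, A², …, A^j` are all partial isometries. -/
def Matrix.pIndex {ι : Type*} [Fintype ι] [DecidableEq ι] (A : Matrix ι ι ℂ) : ℕ∞ :=
  sSup ((↑) '' {j : ℕ | ∀ i ≤ j, (A ^ i).IsPartialIsometry})

/-- The *ascent* `a(A)`: the smallest nonnegative integer `k` with `ker A^k = ker A^(k+1)`. -/
def Matrix.ascent {ι : Type*} [Fintype ι] [DecidableEq ι] (A : Matrix ι ι ℂ) : ℕ :=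
  sInf {k : ℕ | LinearMap.ker (Matrix.toEuclideanLin (A ^ k)) =
    LinearMap.ker (Matrix.toEuclideanLin (A ^ (k + 1)))}

/-- `A` is unitarily similar to `B` (allowing different, necessarily equipotent, index types):
`B = U* A U` for some unitary `U`. -/
def Matrix.UnitarilySimilarTo {ι κ : Type*} [Fintype ι] [Fintype κ] [DecidableEq ι]
    [DecidableEq κ] (A : Matrix ι ι ℂ) (B : Matrix κ κ ℂ) : Prop :=
  ∃ U : Matrix ι κ ℂ, Uᴴ * U = 1 ∧ U * Uᴴ = 1 ∧ B = Uᴴ * A * U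

/-- The `q`-by-`q` nilpotent Jordan block `J_q`. -/
def JordanBlock (q : ℕ) : Matrix (Fin q) (Fin q) ℂ :=
  Matrix.of fun a b => if (b : ℕ) = (a : ℕ) + 1 then 1 else 0

/-- `A` is of class `S_n`: a contraction whose eigenvalues all have moduli strictly
less than `1` and with `rank (1 - A*A) = 1`. -/
def Matrix.IsClassSn {n : ℕ} (A : Matrix (Fin n) (Fin n) ℂ) : Prop :=
  (∀ x : EuclideanSpace ℂ (Fin n), ‖Matrix.toEuclideanLin A x‖ ≤ ‖x‖) ∧
  (∀ z ∈ spectrum ℂ A, ‖z‖ < 1) ∧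
  (1 - Aᴴ * A).rank = 1

/-! ### Auxiliary lemmas -/

section Aux

variable {n : ℕ}

lemma toEuclideanLin_mul' (A B : Matrix (Fin n) (Fin n) ℂ) :
    Matrix.toEuclideanLin (A * B) =
      Matrix.toEuclideanLin A * Matrix.toEuclideanLin B := by
  apply LinearMap.ext
  intro x
  simp [Matrix.toEuclideanLin_apply, Matrix.mulVec_mulVec, Module.End.mul_apply]

lemma toEuclideanLin_pow' (A : Matrix (Fin n) (Fin n) ℂ) (k : ℕ) :
    Matrix.toEuclideanLin (A ^ k) = (Matrix.toEuclideanLin A) ^ k := by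
  induction k with
  | zero =>
    apply LinearMap.ext
    intro x
    simp [Matrix.toEuclideanLin_apply]
  | succ k ih =>
    rw [pow_succ, pow_succ, toEuclideanLin_mul', ih]

/-- Partial isometry property for an endomorphism. -/
def PIop (T : EuclideanSpace ℂ (Fin n) →ₗ[ℂ] EuclideanSpace ℂ (Fin n)) : Prop :=
  ∀ x ∈ (LinearMap.ker T)ᗮ, ‖T x‖ = ‖x‖

lemma isPartialIsometry_pow_iff (A : Matrix (Fin n) (Fin n) ℂ) (k : ℕ) :
    (A ^ k).IsPartialIsometry ↔ PIop ((Matrix.toEuclideanLin A) ^ k) := by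
  unfold Matrix.IsPartialIsometry PIop
  rw [toEuclideanLin_pow']

variable {T : EuclideanSpace ℂ (Fin n) →ₗ[ℂ] EuclideanSpace ℂ (Fin n)}

lemma PIop.contraction (h : PIop T) (y : EuclideanSpace ℂ (Fin n)) : ‖T y‖ ≤ ‖y‖ := by
  obtain ⟨u, hu, v, hv, rfl⟩ := (LinearMap.ker T).exists_add_mem_mem_orthogonal y
  have hTu : T u = 0 := hu
  have h1 : T (u + v) = T v := by rw [map_add, hTu, zero_add]
  have h2 : ‖T v‖ = ‖v‖ := h v hv
  have h3 : ‖u + v‖ ^ 2 = ‖u‖ ^ 2 + ‖v‖ ^ 2 := by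
    rw [pow_two, pow_two, pow_two]
    exact norm_add_sq_eq_norm_sq_add_norm_sq_of_inner_eq_zero u v
      (Submodule.inner_right_of_mem_orthogonal hu hv)
  have h4 : ‖v‖ ≤ ‖u + v‖ := by
    apply le_of_pow_le_pow_left₀ two_ne_zero (norm_nonneg _)
    nlinarith [sq_nonneg (‖u‖)]
  rw [h1, h2]; exact h4

end Aux

/-! ### The key lemma -/

section Key

variable {n : ℕ} {T : EuclideanSpace ℂ (Fin n) →ₗ[ℂ] EuclideanSpace ℂ (Fin n)} {a : ℕ}

/-- If powers up to `a+1` are partial isometries and the kernel chain stabilizes at `a`,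
then `T` maps `(ker T^a)ᗮ` isometrically into itself. -/
lemma key_step (hker : LinearMap.ker (T ^ a) = LinearMap.ker (T ^ (a + 1)))
    (hPI : ∀ i ≤ a + 1, PIop (T ^ i)) :
    ∀ x ∈ (LinearMap.ker (T ^ a))ᗮ,
      T x ∈ (LinearMap.ker (T ^ a))ᗮ ∧ ‖T x‖ = ‖x‖ := by
  intro x hx
  have hcontr : ∀ y, ‖T y‖ ≤ ‖y‖ := by
    have := (hPI 1 (by omega)).contraction
    simpa using this
  have hcontr_pow : ∀ (k : ℕ) (y), ‖(T ^ k) y‖ ≤ ‖y‖ := by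
    intro k
    induction k with
    | zero => intro y; simp
    | succ k ih =>
      intro y
      rw [pow_succ, Module.End.mul_apply]
      exact le_trans (ih _) (hcontr y)
  -- decompose T x with respect to N = ker T^a
  obtain ⟨u, hu, v, hv, hdec⟩ := (LinearMap.ker (T ^ a)).exists_add_mem_mem_orthogonal (T x)
  have hTa_u : (T ^ a) u = 0 := hu
  -- ‖x‖ = ‖T^(a+1) x‖
  have hx' : x ∈ (LinearMap.ker (T ^ (a + 1)))ᗮ := by rw [← hker]; exact hx
  have h1 : ‖(T ^ (a + 1)) x‖ = ‖x‖ := hPI (a + 1) le_rfl x hx'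
  have h2 : (T ^ (a + 1)) x = (T ^ a) v := by
    rw [pow_succ, Module.End.mul_apply, hdec, map_add, hTa_u, zero_add]
  have h3 : ‖(T ^ a) v‖ ≤ ‖v‖ := hcontr_pow a v
  have h4 : ‖T x‖ ^ 2 = ‖u‖ ^ 2 + ‖v‖ ^ 2 := by
    rw [hdec, pow_two, pow_two, pow_two]
    exact norm_add_sq_eq_norm_sq_add_norm_sq_of_inner_eq_zero u v
      (Submodule.inner_right_of_mem_orthogonal hu hv)
  have h5 : ‖T x‖ ≤ ‖x‖ := hcontr x
  have h6 : ‖v‖ ≤ ‖T x‖ := by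
    apply le_of_pow_le_pow_left₀ two_ne_zero (norm_nonneg _)
    nlinarith [sq_nonneg (‖u‖)]
  -- chain of inequalities collapses
  have hxv : ‖x‖ ≤ ‖v‖ := by rw [← h1, h2]; exact h3
  have heq : ‖T x‖ = ‖x‖ := le_antisymm h5 (le_trans hxv h6)
  have hveq : ‖v‖ = ‖T x‖ := le_antisymm h6 (by rw [heq]; exact hxv)
  have hu0 : u = 0 := by
    have hv2 : ‖v‖ ^ 2 = ‖T x‖ ^ 2 := by rw [hveq]
    have hsq : ‖u‖ ^ 2 = 0 := by linarith
    have : ‖u‖ = 0 := pow_eq_zero_iff two_ne_zero |>.mp hsq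
    simpa using this
  refine ⟨?_, heq⟩
  rw [hdec, hu0, zero_add]
  exact hv

lemma key_all (hker : LinearMap.ker (T ^ a) = LinearMap.ker (T ^ (a + 1)))
    (hPI : ∀ i ≤ a + 1, PIop (T ^ i)) : ∀ ℓ : ℕ, PIop (T ^ ℓ) := by
  have hiter : ∀ (k : ℕ) (x), x ∈ (LinearMap.ker (T ^ a))ᗮ →
      (T ^ k) x ∈ (LinearMap.ker (T ^ a))ᗮ ∧ ‖(T ^ k) x‖ = ‖x‖ := by
    intro k
    induction k with
    | zero => intro x hx; simpa using hx
    | succ k ih =>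
      intro x hx
      obtain ⟨hmem, hnorm⟩ := ih x hx
      obtain ⟨hmem', hnorm'⟩ := key_step hker hPI _ hmem
      constructor
      · rw [pow_succ', Module.End.mul_apply]; exact hmem'
      · rw [pow_succ', Module.End.mul_apply, hnorm', hnorm]
  intro ℓ
  rcases le_or_gt ℓ (a + 1) with hl | hl
  · exact hPI ℓ hl
  · have hkerℓ : LinearMap.ker (T ^ ℓ) = LinearMap.ker (T ^ a) := by
      have := Module.End.ker_pow_constant hker (ℓ - a)
      rw [add_tsub_cancel_of_le (by omega : a ≤ ℓ)] at this
      exact this.symm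
    intro x hx
    rw [hkerℓ] at hx
    exact (hiter ℓ x hx).2

end Key

section Main

variable {n : ℕ}

lemma zero_pi {T : EuclideanSpace ℂ (Fin n) →ₗ[ℂ] EuclideanSpace ℂ (Fin n)}
    (hT : T = 0) : PIop T := by
  intro x hx
  have hker : LinearMap.ker T = ⊤ := by rw [hT]; exact LinearMap.ker_zero
  rw [hker, Submodule.top_orthogonal_eq_bot] at hx
  have : x = 0 := hx
  simp [this, hT]

/-- If `T^i` is a partial isometry for all `i ≤ n`, then all powers are. -/
lemma all_of_le_n {T : EuclideanSpace ℂ (Fin n) →ₗ[ℂ] EuclideanSpace ℂ (Fin n)}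
    (a : ℕ)
    (ha : a = sInf {k : ℕ | LinearMap.ker (T ^ k) = LinearMap.ker (T ^ (k + 1))})
    (hPI : ∀ i ≤ n, PIop (T ^ i)) : ∀ ℓ : ℕ, PIop (T ^ ℓ) := by
  have hfr : Module.finrank ℂ (EuclideanSpace ℂ (Fin n)) = n := finrank_euclideanSpace_fin
  have hmemn : n ∈ {k : ℕ | LinearMap.ker (T ^ k) = LinearMap.ker (T ^ (k + 1))} := by
    show LinearMap.ker (T ^ n) = LinearMap.ker (T ^ (n + 1))
    have h1 := Module.End.ker_pow_eq_ker_pow_finrank_of_le (f := T) (m := n + 1)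
      (by rw [hfr]; omega)
    have h2 := Module.End.ker_pow_eq_ker_pow_finrank_of_le (f := T) (m := n)
      (by rw [hfr])
    rw [h1, h2]
  have haS : LinearMap.ker (T ^ a) = LinearMap.ker (T ^ (a + 1)) := by
    rw [ha]; exact Nat.sInf_mem ⟨n, hmemn⟩
  have han : a ≤ n := by rw [ha]; exact Nat.sInf_le hmemn
  rcases lt_or_eq_of_le han with hlt | rfl
  · exact key_all haS (fun i hi => hPI i (by omega))
  -- a = n : the kernel chain is strictly increasing up to n, so T^n = 0
  · have hstrict : ∀ k < a, LinearMap.ker (T ^ k) ≠ LinearMap.ker (T ^ (k + 1)) := by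
      intro k hk hcontra
      have : a ≤ k := by rw [ha]; exact Nat.sInf_le hcontra
      omega
    have hdim : ∀ k ≤ a, k ≤ Module.finrank ℂ (LinearMap.ker (T ^ k)) := by
      intro k
      induction k with
      | zero => intro _; omega
      | succ k ih =>
        intro hk
        have hle : LinearMap.ker (T ^ k) ≤ LinearMap.ker (T ^ (k + 1)) := by
          rw [pow_succ']
          exact LinearMap.ker_le_ker_comp _ _
        have hne := hstrict k (by omega)
        have hltk : LinearMap.ker (T ^ k) < LinearMap.ker (T ^ (k + 1)) :=
          lt_of_le_of_ne hle hne
        have := Submodule.finrank_lt_finrank_of_lt hltk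
        have := ih (by omega)
        omega
    have hkertop : LinearMap.ker (T ^ a) = ⊤ := by
      apply Submodule.eq_top_of_finrank_eq
      have h1 := hdim a le_rfl
      have h2 : Module.finrank ℂ (LinearMap.ker (T ^ a)) ≤
          Module.finrank ℂ (EuclideanSpace ℂ (Fin a)) := Submodule.finrank_le _
      omega
    have hTn : T ^ a = 0 := LinearMap.ker_eq_top.mp hkertop
    have hTn1 : T ^ (a + 1) = 0 := by rw [pow_succ', hTn, mul_zero]
    apply key_all haS
    intro i hi
    rcases le_or_gt i a with h | h
    · exact hPI i h
    · have hieq : i = a + 1 := by omega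
      rw [hieq]
      exact zero_pi hTn1

end Main

/-- **Corollary 2.5.** For any `n`-by-`n` complex matrix `A`, either
`0 ≤ p(A) ≤ min {a(A), n - 1}` or `p(A) = ∞` (i.e. every power of `A` is a partial
isometry). -/
theorem pIndex_le_min_or_top (n : ℕ) (A : Matrix (Fin n) (Fin n) ℂ) :
    A.pIndex ≤ min (A.ascent : ℕ∞) ((n - 1 : ℕ) : ℕ∞) ∨
      (A.pIndex = ⊤ ∧ ∀ ℓ : ℕ, (A ^ ℓ).IsPartialIsometry) := by
  set T := Matrix.toEuclideanLin A with hT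
  have hasc : A.ascent = sInf {k : ℕ | LinearMap.ker (T ^ k) = LinearMap.ker (T ^ (k + 1))} := by
    unfold Matrix.ascent
    congr 1
    ext k
    simp only [Set.mem_setOf_eq, toEuclideanLin_pow', ← hT]
  by_cases hall : ∀ ℓ : ℕ, (A ^ ℓ).IsPartialIsometry
  · right
    refine ⟨?_, hall⟩
    unfold Matrix.pIndex
    rw [sSup_eq_top]
    intro b hb
    lift b to ℕ using hb.ne
    exact ⟨((b + 1 : ℕ) : ℕ∞), ⟨b + 1, fun i _ => hall i, rfl⟩, by
      exact_mod_cast Nat.lt_succ_self b⟩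
  · left
    unfold Matrix.pIndex
    apply sSup_le
    rintro x ⟨j, hj, rfl⟩
    have hjPI : ∀ i ≤ j, PIop (T ^ i) := fun i hi =>
      (isPartialIsometry_pow_iff A i).mp (hj i hi)
    have hallT : ¬ ∀ ℓ : ℕ, PIop (T ^ ℓ) := by
      intro h
      exact hall fun ℓ => (isPartialIsometry_pow_iff A ℓ).mpr (h ℓ)
    -- j ≤ ascent
    have hja : j ≤ A.ascent := by
      by_contra hcon
      push_neg at hcon
      have hfr : Module.finrank ℂ (EuclideanSpace ℂ (Fin n)) = n := finrank_euclideanSpace_fin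
      have hmemn : n ∈ {k : ℕ | LinearMap.ker (T ^ k) = LinearMap.ker (T ^ (k + 1))} := by
        show LinearMap.ker (T ^ n) = LinearMap.ker (T ^ (n + 1))
        have h1 := Module.End.ker_pow_eq_ker_pow_finrank_of_le (f := T) (m := n + 1)
          (by rw [hfr]; omega)
        have h2 := Module.End.ker_pow_eq_ker_pow_finrank_of_le (f := T) (m := n)
          (by rw [hfr])
        rw [h1, h2]
      have haS : LinearMap.ker (T ^ A.ascent) = LinearMap.ker (T ^ (A.ascent + 1)) := by
        rw [hasc]
        exact Nat.sInf_mem ⟨n, hmemn⟩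
      exact hallT (key_all haS (fun i hi => hjPI i (by omega)))
    -- j ≤ n - 1
    have hjn : j ≤ n - 1 := by
      by_contra hcon
      push_neg at hcon
      have hjn' : n ≤ j := by omega
      exact hallT (all_of_le_n A.ascent hasc (fun i hi => hjPI i (by omega)))
    exact le_min (by exact_mod_cast hja) (by exact_mod_cast hjn)

end
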